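/- Observational entropy concentration for t-designs: Let ε ≥ 0, t ≥ 1 a natural number, and let E = {(p_i, U_i)}_{i=1}^{N} be a finite ensemble of unitaries on ℂ^d (d ≥ 2) such that for every unit vector φ ∈ ℂ^d and every positive semidefinite P ≤ I, Σ_i p_i |Tr[U_i |φ⟩⟨φ| U_i† P] − Tr[u P]|^t ≤ (1 + ε)(t²/d)^{t/2}. Then for every density matrix ρ on ℂ^d, every POVM P = {P_x}_{x∈X} with finite outcome set and all volume terms V_x = Tr[P_x] strictly positive, and every δ > 0, Σ_{i : S_P(U_i ρ U_i†) ≤ (1−δ) log d} p_i ≤ ((1 + ε)/κ(P)) · (t²/(κ(P)² δ d log d))^{t/2}, where κ(P) = min_x Tr[u P_x]. -/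

import Mathlib

/-!
Write `q x = Tr[u P_x]` and `p x = Tr[P_x U ρ U†]`. Then `S_P(U ρ U†) = log d - D(p ‖ q)`, so low
entropy forces `D(p ‖ q) ≥ δ log d`. Since `D(p ‖ q) ≤ χ²(p ‖ q) = ∑ₓ (p x - q x)² / q x`, some
outcome then deviates by `|p x - q x| ≥ q x √(δ log d)`. The design hypothesis, extended from pure
states to `ρ` by the spectral decomposition and Jensen's inequality, bounds the `t`-th moment of
each deviation; Markov's inequality at every outcome and a union bound over outcomes, weighted by
`q x ≥ κ(P)` and `∑ₓ q x = 1`, give the claim.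
-/

open MeasureTheory Matrix Finset Filter
open scoped ComplexOrder

noncomputable section

/-- Borel-measurable structure on `d × d` complex matrices (entrywise). -/
instance matrixMeasurableSpace {d : ℕ} : MeasurableSpace (Matrix (Fin d) (Fin d) ℂ) :=
  inferInstanceAs (MeasurableSpace ((Fin d) → (Fin d) → ℂ))

/-- The maximally mixed state `u = I / d` on `ℂ^d`. -/
def mmix (d : ℕ) : Matrix (Fin d) (Fin d) ℂ := (d : ℂ)⁻¹ • 1

/-- Observational entropy of the state `ρ` with respect to the POVM `P = {P_x}`:
`S_P(ρ) = -∑_x Tr[P_x ρ] · log (Tr[P_x ρ] / Tr[P_x])` (natural log, `0 · log 0 = 0`). -/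
def obsEnt {d : ℕ} {X : Type*} [Fintype X]
    (P : X → Matrix (Fin d) (Fin d) ℂ) (ρ : Matrix (Fin d) (Fin d) ℂ) : ℝ :=
  -∑ x, ((P x * ρ).trace.re) * Real.log (((P x * ρ).trace.re) / ((P x).trace.re))

/-- `κ(P) = min_x Tr[u P_x]`. -/
def kappa {d : ℕ} {X : Type*} [Fintype X] [Nonempty X]
    (P : X → Matrix (Fin d) (Fin d) ℂ) : ℝ :=
  ⨅ x, ((mmix d * P x).trace.re)

/-- Frobenius (Hilbert–Schmidt) norm `‖A‖₂ = √(Tr[A† A])`. -/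
def frob {d : ℕ} (A : Matrix (Fin d) (Fin d) ℂ) : ℝ := Real.sqrt ((Aᴴ * A).trace.re)

section RelativeEntropy

variable {X : Type*} [Fintype X] {p q : X → ℝ}

theorem sum_mul_log_div_le_sum_sq_div (hp : ∀ x, 0 ≤ p x) (hq : ∀ x, 0 < q x)
    (hpq : ∑ x, p x = ∑ x, q x) :
    ∑ x, p x * Real.log (p x / q x) ≤ ∑ x, (p x - q x) ^ 2 / q x := by
  have hterm : ∀ x, p x * Real.log (p x / q x) ≤ (p x - q x) ^ 2 / q x + (p x - q x) := by
    intro x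
    have hq0 := (hq x).ne'
    rcases (hp x).eq_or_lt with h0 | h0
    · rw [← h0, zero_sub, neg_sq, sq, mul_self_div_self]; simp
    · calc p x * Real.log (p x / q x) ≤ p x * (p x / q x - 1) :=
            mul_le_mul_of_nonneg_left (Real.log_le_sub_one_of_pos (div_pos h0 (hq x))) h0.le
        _ = (p x - q x) ^ 2 / q x + (p x - q x) := by field_simp; ring
  calc ∑ x, p x * Real.log (p x / q x) ≤ ∑ x, ((p x - q x) ^ 2 / q x + (p x - q x)) :=
        sum_le_sum fun x _ => hterm x
    _ = ∑ x, (p x - q x) ^ 2 / q x := by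
        rw [sum_add_distrib, sum_sub_distrib, hpq, sub_self, add_zero]

theorem exists_mul_sqrt_le_abs_sub_of_le_sum_mul_log_div (hp : ∀ x, 0 ≤ p x)
    (hq : ∀ x, 0 < q x) (hp1 : ∑ x, p x = 1) (hq1 : ∑ x, q x = 1) {c : ℝ} (hc : 0 < c)
    (hpq : c ≤ ∑ x, p x * Real.log (p x / q x)) :
    ∃ x, q x * √c ≤ |p x - q x| := by
  by_contra! hsmall
  have hne : (univ : Finset X).Nonempty := nonempty_of_sum_ne_zero (hq1 ▸ one_ne_zero)
  have hchi : ∑ x, (p x - q x) ^ 2 / q x < ∑ x, q x * c := by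
    refine sum_lt_sum_of_nonempty hne fun x _ => ?_
    rw [div_lt_iff₀ (hq x), ← sq_abs]
    calc |p x - q x| ^ 2 < (q x * √c) ^ 2 := pow_lt_pow_left₀ (hsmall x) (abs_nonneg _) two_ne_zero
      _ = q x * c * q x := by rw [mul_pow, Real.sq_sqrt hc.le]; ring
  rw [← sum_mul, hq1, one_mul] at hchi
  linarith [sum_mul_log_div_le_sum_sq_div hp hq (hp1.trans hq1.symm)]

theorem neg_sum_mul_log_div_mul_eq_log_sub (hp : ∀ x, 0 ≤ p x) (hq : ∀ x, 0 < q x)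
    (hp1 : ∑ x, p x = 1) {D : ℝ} (hD : 0 < D) :
    -∑ x, p x * Real.log (p x / (q x * D)) = Real.log D - ∑ x, p x * Real.log (p x / q x) := by
  have hterm : ∀ x, p x * Real.log (p x / (q x * D))
      = p x * Real.log (p x / q x) - p x * Real.log D := by
    intro x
    rcases (hp x).eq_or_lt with h0 | h0
    · simp [← h0]
    · rw [← div_div, Real.log_div (div_pos h0 (hq x)).ne' hD.ne', mul_sub]
  simp only [hterm, sum_sub_distrib, ← sum_mul, hp1]
  ring

end RelativeEntropy

section Markov

variable {ι : Type*} [Fintype ι] {p : ι → ℝ}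

theorem sum_filter_le_le_sum_mul_pow_div_pow (hp : ∀ i, 0 ≤ p i) {A : ι → ℝ} (hA : ∀ i, 0 ≤ A i)
    {a : ℝ} (ha : 0 < a) (t : ℕ) :
    ∑ i ∈ univ.filter (fun i => a ≤ A i), p i ≤ (∑ i, p i * A i ^ t) / a ^ t := by
  have hweight : ∀ i, 0 ≤ p i * (A i / a) ^ t := fun i =>
    mul_nonneg (hp i) (pow_nonneg (div_nonneg (hA i) ha.le) t)
  calc ∑ i ∈ univ.filter (fun i => a ≤ A i), p i
      ≤ ∑ i ∈ univ.filter (fun i => a ≤ A i), p i * (A i / a) ^ t := by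
        refine sum_le_sum fun i hi => le_mul_of_one_le_right (hp i) (one_le_pow₀ ?_)
        exact (one_le_div ha).mpr (mem_filter.mp hi).2
    _ ≤ ∑ i, p i * (A i / a) ^ t :=
        sum_le_sum_of_subset_of_nonneg (filter_subset _ _) fun i _ _ => hweight i
    _ = (∑ i, p i * A i ^ t) / a ^ t := by
        rw [sum_div]; simp only [div_pow, mul_div_assoc]

theorem sum_le_sum_sum_filter_of_forall_exists {X : Type*} [Fintype X] (hp : ∀ i, 0 ≤ p i)
    {E : X → ι → Prop} [∀ x i, Decidable (E x i)] {S : Finset ι} (hS : ∀ i ∈ S, ∃ x, E x i) :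
    ∑ i ∈ S, p i ≤ ∑ x, ∑ i ∈ univ.filter (E x), p i := by
  calc ∑ i ∈ S, p i ≤ ∑ i ∈ S, ∑ x, if E x i then p i else 0 := by
        refine sum_le_sum fun i hi => ?_
        obtain ⟨x, hx⟩ := hS i hi
        calc p i = if E x i then p i else 0 := (if_pos hx).symm
          _ ≤ ∑ y, if E y i then p i else 0 :=
            single_le_sum (f := fun y => if E y i then p i else 0)
              (fun y _ => ite_nonneg (hp i) le_rfl) (mem_univ x)
    _ = ∑ x, ∑ i ∈ S.filter (E x), p i := by rw [sum_comm]; simp only [sum_filter]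
    _ ≤ ∑ x, ∑ i ∈ univ.filter (E x), p i :=
        sum_le_sum fun x _ =>
          sum_le_sum_of_subset_of_nonneg (filter_subset_filter _ (subset_univ S)) fun i _ _ => hp i

theorem sum_le_div_of_exists_mul_le {X : Type*} [Fintype X] (hp : ∀ i, 0 ≤ p i)
    {q : X → ℝ} (hq1 : ∑ x, q x = 1) {κ : ℝ} (hκ : 0 < κ) (hκq : ∀ x, κ ≤ q x)
    {A : ι → X → ℝ} (hA : ∀ i x, 0 ≤ A i x) (t : ℕ) {M : ℝ}
    (hM : ∀ x, ∑ i, p i * A i x ^ t ≤ M) {s : ℝ} (hs : 0 < s) {S : Finset ι}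
    (hS : ∀ i ∈ S, ∃ x, q x * s ≤ A i x) :
    ∑ i ∈ S, p i ≤ M / (κ ^ (t + 1) * s ^ t) := by
  classical
  have hq : ∀ x, 0 < q x := fun x => hκ.trans_le (hκq x)
  have hM0 : 0 ≤ M := by
    obtain ⟨x⟩ : Nonempty X := by
      by_contra! h; simp at hq1
    exact (sum_nonneg fun i _ => mul_nonneg (hp i) (pow_nonneg (hA i x) t)).trans (hM x)
  calc ∑ i ∈ S, p i
      ≤ ∑ x, ∑ i ∈ univ.filter (fun i => q x * s ≤ A i x), p i :=
        sum_le_sum_sum_filter_of_forall_exists hp hS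
    _ ≤ ∑ x, M / (q x * s) ^ t := by
        refine sum_le_sum fun x _ => ?_
        have hqs := mul_pos (hq x) hs
        exact (sum_filter_le_le_sum_mul_pow_div_pow hp (fun i => hA i x) hqs t).trans
          (div_le_div_of_nonneg_right (hM x) (pow_nonneg hqs.le t))
    _ ≤ ∑ x, q x * (M / (κ ^ (t + 1) * s ^ t)) := by
        refine sum_le_sum fun x _ => ?_
        have hqx := hq x
        calc M / (q x * s) ^ t = q x * (M / (q x ^ (t + 1) * s ^ t)) := by
              field_simp; ring
          _ ≤ q x * (M / (κ ^ (t + 1) * s ^ t)) := by gcongr; exact hκq x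
    _ = M / (κ ^ (t + 1) * s ^ t) := by rw [← sum_mul, hq1, one_mul]

end Markov

theorem pow_abs_sum_mul_le_sum_mul_pow_abs {K : Type*} [Fintype K] {w : K → ℝ}
    (hw : ∀ k, 0 ≤ w k) (hw1 : ∑ k, w k = 1) (a : K → ℝ) (t : ℕ) :
    |∑ k, w k * a k| ^ t ≤ ∑ k, w k * |a k| ^ t := by
  have habs : |∑ k, w k * a k| ≤ ∑ k, w k * |a k| :=
    (abs_sum_le_sum_abs _ _).trans_eq (by simp only [abs_mul, abs_of_nonneg (hw _)])
  exact (pow_le_pow_left₀ (abs_nonneg _) habs t).trans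
    (Real.pow_arith_mean_le_arith_mean_pow univ w _ (fun k _ => hw k) hw1
      (fun k _ => abs_nonneg (a k)) t)

namespace Matrix

variable {n : Type*}

theorem PosSemidef.one_sub_of_sum_eq_one [DecidableEq n] {X : Type*} [Fintype X]
    {P : X → Matrix n n ℂ} (hP : ∀ x, (P x).PosSemidef) (hP1 : ∑ x, P x = 1) (x : X) :
    (1 - P x).PosSemidef := by
  classical
  rw [← hP1, ← sum_erase_add _ _ (mem_univ x), add_sub_cancel_right]
  exact posSemidef_sum _ fun y _ => hP y

variable [Fintype n]

theorem PosSemidef.re_trace_mul_nonneg {A B : Matrix n n ℂ} (hA : A.PosSemidef)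
    (hB : B.PosSemidef) : 0 ≤ (A * B).trace.re := by
  classical
  obtain ⟨C, rfl⟩ : ∃ C : Matrix n n ℂ, B = star C * C := by
    open scoped MatrixOrder in exact CStarAlgebra.nonneg_iff_eq_star_mul_self.mp hB.nonneg
  rw [← Matrix.mul_assoc, trace_mul_cycle, star_eq_conjTranspose]
  exact (Complex.nonneg_iff.mp (hA.mul_mul_conjTranspose_same C).trace_nonneg).1

theorem sum_re_trace_mul_eq_one [DecidableEq n] {X : Type*} [Fintype X] {P : X → Matrix n n ℂ}
    (hP1 : ∑ x, P x = 1) {σ : Matrix n n ℂ} (hσ1 : σ.trace = 1) :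
    ∑ x, (P x * σ).trace.re = 1 := by
  rw [← Complex.re_sum, ← trace_sum, ← Matrix.sum_mul, hP1, Matrix.one_mul, hσ1, Complex.one_re]

theorem trace_mul_mul_conjTranspose_of_mem_unitaryGroup [DecidableEq n] {U : Matrix n n ℂ}
    (hU : U ∈ unitaryGroup n ℂ) (σ : Matrix n n ℂ) : (U * σ * Uᴴ).trace = σ.trace := by
  have hUU : Uᴴ * U = 1 := mem_unitaryGroup_iff'.mp hU
  rw [trace_mul_cycle, hUU, Matrix.one_mul]

namespace IsHermitian

variable [DecidableEq n] {A : Matrix n n ℂ} (hA : A.IsHermitian)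

theorem star_eigenvectorBasis_dotProduct_self (i : n) :
    star ⇑(hA.eigenvectorBasis i) ⬝ᵥ ⇑(hA.eigenvectorBasis i) = 1 := by
  rw [dotProduct_comm, ← EuclideanSpace.inner_eq_star_dotProduct, inner_self_eq_norm_sq_to_K,
    hA.eigenvectorBasis.orthonormal.1 i]
  simp

theorem eq_sum_eigenvalues_smul_vecMulVec :
    A = ∑ i, (hA.eigenvalues i : ℂ) •
      vecMulVec ⇑(hA.eigenvectorBasis i) (star ⇑(hA.eigenvectorBasis i)) := by
  conv_lhs => rw [hA.spectral_theorem, Unitary.conjStarAlgAut_apply]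
  ext j k
  simp [Matrix.mul_apply, vecMulVec_apply, diagonal_apply, sum_apply, mul_comm, mul_assoc]

end IsHermitian

theorem PosSemidef.sum_eigenvalues_eq_one [DecidableEq n] {ρ : Matrix n n ℂ} (hρ : ρ.PosSemidef)
    (hρ1 : ρ.trace = 1) : ∑ i, hρ.1.eigenvalues i = 1 := by
  have := congrArg Complex.re (hρ.1.trace_eq_sum_eigenvalues.symm.trans hρ1)
  simpa [Complex.re_sum] using this

theorem sum_mul_abs_re_trace_sub_pow_le_of_pure [DecidableEq n] {ι : Type*} [Fintype ι]
    {p : ι → ℝ} (hp : ∀ i, 0 ≤ p i) (U : ι → Matrix n n ℂ) (Pm : Matrix n n ℂ) (c : ℝ) (t : ℕ)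
    {M : ℝ} (hpure : ∀ φ : n → ℂ, star φ ⬝ᵥ φ = 1 →
      ∑ i, p i * |(Pm * (U i * vecMulVec φ (star φ) * (U i)ᴴ)).trace.re - c| ^ t ≤ M)
    {ρ : Matrix n n ℂ} (hρ : ρ.PosSemidef) (hρ1 : ρ.trace = 1) :
    ∑ i, p i * |(Pm * (U i * ρ * (U i)ᴴ)).trace.re - c| ^ t ≤ M := by
  set w := hρ.1.eigenvalues
  set v : n → n → ℂ := fun k => ⇑(hρ.1.eigenvectorBasis k)
  set a : n → ι → ℝ := fun k i => (Pm * (U i * vecMulVec (v k) (star (v k)) * (U i)ᴴ)).trace.re - c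
  have hw0 : ∀ k, 0 ≤ w k := hρ.eigenvalues_nonneg
  have hw1 : ∑ k, w k = 1 := hρ.sum_eigenvalues_eq_one hρ1
  have hmix : ∀ i, (Pm * (U i * ρ * (U i)ᴴ)).trace.re - c = ∑ k, w k * a k i := by
    intro i
    conv_lhs => rw [hρ.1.eq_sum_eigenvalues_smul_vecMulVec]
    simp only [a, mul_sub, sum_sub_distrib, ← sum_mul, hw1, one_mul, Matrix.mul_sum, Matrix.sum_mul,
      Matrix.mul_smul, Matrix.smul_mul, trace_sum, trace_smul, Complex.re_sum, smul_eq_mul,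
      Complex.re_ofReal_mul]
    rfl
  calc ∑ i, p i * |(Pm * (U i * ρ * (U i)ᴴ)).trace.re - c| ^ t
      ≤ ∑ i, p i * ∑ k, w k * |a k i| ^ t := by
        refine sum_le_sum fun i _ => mul_le_mul_of_nonneg_left ?_ (hp i)
        rw [hmix i]
        exact pow_abs_sum_mul_le_sum_mul_pow_abs hw0 hw1 _ t
    _ = ∑ k, w k * ∑ i, p i * |a k i| ^ t := by
        simp only [mul_sum]
        rw [sum_comm]
        exact sum_congr rfl fun k _ => sum_congr rfl fun i _ => mul_left_comm _ _ _
    _ ≤ ∑ k, w k * M :=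
        sum_le_sum fun k _ => mul_le_mul_of_nonneg_left
          (hpure (v k) (hρ.1.star_eigenvectorBasis_dotProduct_self k)) (hw0 k)
    _ = M := by rw [← sum_mul, hw1, one_mul]

end Matrix

theorem re_trace_mmix_mul {d : ℕ} (A : Matrix (Fin d) (Fin d) ℂ) :
    (mmix d * A).trace.re = A.trace.re / d := by
  rw [mmix, Matrix.smul_mul, Matrix.one_mul, trace_smul, smul_eq_mul, ← Complex.ofReal_natCast,
    ← Complex.ofReal_inv, Complex.re_ofReal_mul, inv_mul_eq_div]

theorem trace_mmix {d : ℕ} (hd : d ≠ 0) : (mmix d).trace = 1 := by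
  rw [mmix, trace_smul, trace_one, Fintype.card_fin, smul_eq_mul,
    inv_mul_cancel₀ (Nat.cast_ne_zero.mpr hd)]

theorem obsEnt_eq_log_sub {d : ℕ} (hd : 0 < d) {X : Type*} [Fintype X]
    {P : X → Matrix (Fin d) (Fin d) ℂ} (hV : ∀ x, 0 < (P x).trace.re) {σ : Matrix (Fin d) (Fin d) ℂ}
    (hσ : ∀ x, 0 ≤ (P x * σ).trace.re) (hσ1 : ∑ x, (P x * σ).trace.re = 1) :
    obsEnt P σ = Real.log d -
      ∑ x, (P x * σ).trace.re * Real.log ((P x * σ).trace.re / (mmix d * P x).trace.re) := by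
  have hd' : (0 : ℝ) < d := Nat.cast_pos.mpr hd
  have hV' : ∀ x, (P x).trace.re = (mmix d * P x).trace.re * d := fun x => by
    rw [re_trace_mmix_mul, div_mul_cancel₀ _ hd'.ne']
  simp only [obsEnt, hV']
  exact neg_sum_mul_log_div_mul_eq_log_sub hσ
    (fun x => by rw [re_trace_mmix_mul]; exact div_pos (hV x) hd') hσ1 hd'

theorem kappa_le {d : ℕ} {X : Type*} [Fintype X] [Nonempty X] (P : X → Matrix (Fin d) (Fin d) ℂ)
    (x : X) : kappa P ≤ (mmix d * P x).trace.re :=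
  ciInf_le (Set.finite_range _).bddBelow x

theorem kappa_pos {d : ℕ} {X : Type*} [Fintype X] [Nonempty X] {P : X → Matrix (Fin d) (Fin d) ℂ}
    (hP : ∀ x, 0 < (mmix d * P x).trace.re) : 0 < kappa P := by
  obtain ⟨x, hx⟩ := exists_eq_ciInf_of_finite (f := fun x => (mmix d * P x).trace.re)
  exact (hP x).trans_eq hx

theorem mul_rpow_div_pow_succ_mul_sqrt_pow_eq (C : ℝ) {a D κ δ L : ℝ} (ha : 0 ≤ a) (hD : 0 < D)
    (hκ : 0 < κ) (hδ : 0 < δ) (hL : 0 < L) (t : ℕ) :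
    C * (a / D) ^ ((t : ℝ) / 2) / (κ ^ (t + 1) * √(δ * L) ^ t)
      = C / κ * (a / (κ ^ 2 * δ * D * L)) ^ ((t : ℝ) / 2) := by
  have hδL : 0 < δ * L := mul_pos hδ hL
  have hsqrt : √(δ * L) ^ t = (δ * L) ^ ((t : ℝ) / 2) := by
    rw [Real.sqrt_eq_rpow, ← Real.rpow_natCast, ← Real.rpow_mul hδL.le, one_div_mul_eq_div]
  have hκt : (κ ^ 2) ^ ((t : ℝ) / 2) = κ ^ t := by
    rw [← Real.rpow_natCast κ 2, ← Real.rpow_mul hκ.le, ← Real.rpow_natCast]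
    congr 1; push_cast; ring
  rw [show a / (κ ^ 2 * δ * D * L) = a / D / (κ ^ 2 * (δ * L)) by field_simp,
    Real.div_rpow (div_nonneg ha hD.le) (by positivity : 0 ≤ κ ^ 2 * (δ * L)),
    Real.mul_rpow (by positivity) hδL.le, hκt, hsqrt, pow_succ]
  have : 0 < (δ * L) ^ ((t : ℝ) / 2) := Real.rpow_pos_of_pos hδL _
  field_simp

open Classical in
theorem obsEnt_concentration_t_design_general {d : ℕ} (hd : 2 ≤ d)
    (ε : ℝ) (t : ℕ)
    (N : ℕ) (p : Fin N → ℝ) (U : Fin N → Matrix (Fin d) (Fin d) ℂ)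
    (hp0 : ∀ i, 0 ≤ p i)
    (hU : ∀ i, U i ∈ Matrix.unitaryGroup (Fin d) ℂ)
    (hdesign : ∀ φ : Fin d → ℂ, star φ ⬝ᵥ φ = 1 →
      ∀ Pm : Matrix (Fin d) (Fin d) ℂ, Pm.PosSemidef →
        ((1 : Matrix (Fin d) (Fin d) ℂ) - Pm).PosSemidef →
        ∑ i, p i * |(Pm * (U i * Matrix.vecMulVec φ (star φ) * (U i)ᴴ)).trace.re -
            ((mmix d) * Pm).trace.re| ^ t
          ≤ (1 + ε) * (((t : ℝ)^2 / d) ^ ((t : ℝ) / 2)))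
    (ρ : Matrix (Fin d) (Fin d) ℂ) (hρ : ρ.PosSemidef) (hρ1 : ρ.trace = 1)
    {X : Type} [Fintype X] [Nonempty X]
    (P : X → Matrix (Fin d) (Fin d) ℂ)
    (hPpos : ∀ x, (P x).PosSemidef) (hPsum : ∑ x, P x = 1)
    (hV : ∀ x, 0 < (P x).trace.re)
    (δ : ℝ) (hδ : 0 < δ) :
    ∑ i ∈ Finset.univ.filter (fun i =>
        obsEnt P (U i * ρ * (U i)ᴴ) ≤ (1 - δ) * Real.log d), p i
      ≤ ((1 + ε) / kappa P) *
        (((t : ℝ)^2 / ((kappa P)^2 * δ * d * Real.log d)) ^ ((t : ℝ) / 2)) := by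
  have hd0 : 0 < d := by omega
  have hlog : 0 < Real.log d := Real.log_pos (by exact_mod_cast hd)
  set q : X → ℝ := fun x => (mmix d * P x).trace.re
  set pr : Fin N → X → ℝ := fun i x => (P x * (U i * ρ * (U i)ᴴ)).trace.re
  have hq : ∀ x, 0 < q x := fun x => by
    simp only [q, re_trace_mmix_mul]; exact div_pos (hV x) (Nat.cast_pos.mpr hd0)
  have hq1 : ∑ x, q x = 1 := by
    simp only [q, trace_mul_comm (mmix d)]
    exact sum_re_trace_mul_eq_one hPsum (trace_mmix hd0.ne')
  have hpr0 : ∀ i x, 0 ≤ pr i x := fun i x =>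
    (hPpos x).re_trace_mul_nonneg (hρ.mul_mul_conjTranspose_same (U i))
  have hpr1 : ∀ i, ∑ x, pr i x = 1 := fun i =>
    sum_re_trace_mul_eq_one hPsum
      ((trace_mul_mul_conjTranspose_of_mem_unitaryGroup (hU i) ρ).trans hρ1)
  have hmoment : ∀ x, ∑ i, p i * |pr i x - q x| ^ t ≤ (1 + ε) * (((t : ℝ)^2 / d) ^ ((t : ℝ) / 2)) :=
    fun x => sum_mul_abs_re_trace_sub_pow_le_of_pure hp0 U (P x) (q x) t
      (fun φ hφ => hdesign φ hφ (P x) (hPpos x) (PosSemidef.one_sub_of_sum_eq_one hPpos hPsum x))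
      hρ hρ1
  have hdeviation : ∀ i ∈ univ.filter (fun i => obsEnt P (U i * ρ * (U i)ᴴ) ≤ (1 - δ) * Real.log d),
      ∃ x, q x * √(δ * Real.log d) ≤ |pr i x - q x| := by
    intro i hi
    have hlow := (mem_filter.mp hi).2
    rw [obsEnt_eq_log_sub hd0 hV (hpr0 i) (hpr1 i)] at hlow
    exact exists_mul_sqrt_le_abs_sub_of_le_sum_mul_log_div (hpr0 i) hq (hpr1 i) hq1
      (mul_pos hδ hlog) (by linarith)
  calc _ ≤ (1 + ε) * (((t : ℝ)^2 / d) ^ ((t : ℝ) / 2))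
        / (kappa P ^ (t + 1) * √(δ * Real.log d) ^ t) :=
        sum_le_div_of_exists_mul_le hp0 hq1 (kappa_pos hq) (kappa_le P)
          (fun i x => abs_nonneg _) t hmoment (Real.sqrt_pos.mpr (mul_pos hδ hlog)) hdeviation
    _ = _ := mul_rpow_div_pow_succ_mul_sqrt_pow_eq _ (sq_nonneg _) (Nat.cast_pos.mpr hd0)
        (kappa_pos hq) hδ hlog t

open Classical in
/-- **Observational entropy concentration for t-designs.** If the ensemble `{(pᵢ, Uᵢ)}`
satisfies the `t`-th moment bound `∑ᵢ pᵢ |Tr[Uᵢ|φ⟩⟨φ|Uᵢ†P] - Tr[uP]|ᵗ ≤ (1+ε)(t²/d)^(t/2)`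
on all pure states, then for every density matrix `ρ`, POVM `P` and `δ > 0`, the
probability that `S_P(UᵢρUᵢ†) ≤ (1-δ) log d` is at most
`((1+ε)/κ(P)) · (t²/(κ(P)² δ d log d))^(t/2)`. -/
theorem obsEnt_concentration_t_design {d : ℕ} (hd : 2 ≤ d)
    (ε : ℝ) (hε : 0 ≤ ε) (t : ℕ) (ht : 1 ≤ t)
    (N : ℕ) (p : Fin N → ℝ) (U : Fin N → Matrix (Fin d) (Fin d) ℂ)
    (hp0 : ∀ i, 0 ≤ p i) (hp1 : ∑ i, p i = 1)
    (hU : ∀ i, U i ∈ Matrix.unitaryGroup (Fin d) ℂ)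
    (hdesign : ∀ φ : Fin d → ℂ, star φ ⬝ᵥ φ = 1 →
      ∀ Pm : Matrix (Fin d) (Fin d) ℂ, Pm.PosSemidef →
        ((1 : Matrix (Fin d) (Fin d) ℂ) - Pm).PosSemidef →
        ∑ i, p i * |(Pm * (U i * Matrix.vecMulVec φ (star φ) * (U i)ᴴ)).trace.re -
            ((mmix d) * Pm).trace.re| ^ t
          ≤ (1 + ε) * (((t : ℝ)^2 / d) ^ ((t : ℝ) / 2)))
    (ρ : Matrix (Fin d) (Fin d) ℂ) (hρ : ρ.PosSemidef) (hρ1 : ρ.trace = 1)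
    {X : Type} [Fintype X] [Nonempty X]
    (P : X → Matrix (Fin d) (Fin d) ℂ)
    (hPpos : ∀ x, (P x).PosSemidef) (hPsum : ∑ x, P x = 1)
    (hV : ∀ x, 0 < (P x).trace.re)
    (δ : ℝ) (hδ : 0 < δ) :
    ∑ i ∈ Finset.univ.filter (fun i =>
        obsEnt P (U i * ρ * (U i)ᴴ) ≤ (1 - δ) * Real.log d), p i
      ≤ ((1 + ε) / kappa P) *
        (((t : ℝ)^2 / ((kappa P)^2 * δ * d * Real.log d)) ^ ((t : ℝ) / 2)) :=
  obsEnt_concentration_t_design_general hd ε t N p U hp0 hU hdesign ρ hρ hρ1 P hPpos hPsum hV δ hδ
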